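/- Let $Z_1,\dots,Z_n$ be i.i.d. uniform on $[0,1]$ and define the lattice $Q_i^n = i/(n+1)$ for $i = 1,\dots,n$. Then $\mathbb{E}\left[\min_{\pi \in S_n} \frac{1}{n} \sum_{i=1}^n (Z_i - Q^n_{\pi(i)})^2\right] \le \frac{1}{4(n+2)}$; in particular, the expected optimal assignment cost tends to $0$ as $n \to \infty$. -/

import Mathlib

/-!
Match the sample to the lattice in increasing order: the `i`-th smallest `Zⱼ` (counting from 0) goes to
`(i + 1)/(n + 1)`, its rank being `#{k | Zₖ < Zⱼ}`; ties have probability zero, so almost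
surely this is a genuine permutation. Expanding the square, the cost of this
matching is `∑ⱼ Zⱼ² - 2/(n+1) ∑ⱼ Zⱼ (1 + #{k | Zₖ < Zⱼ}) + ∑ᵢ ((i+1)/(n+1))²`, whose expectation
only involves single coordinates and pairs: `E[Z²] = 1/3`, `E[Z] = 1/2` and
`E[Zⱼ 1{Zₖ < Zⱼ}] = 1/3` for `k ≠ j`. This gives an expected mean cost of `1/(6(n+1))`.
-/

open MeasureTheory ProbabilityTheory Filter Function

section Rank

open Finset

variable {α : Type*} [LinearOrder α] {n : ℕ}

def rank (z : Fin n → α) (i : Fin n) : Fin n :=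
  ⟨#{k | z k < z i},
    by simpa using card_lt_univ_of_notMem (s := {k | z k < z i}) (x := i) (by simp)⟩

lemma rank_lt_rank (z : Fin n → α) {i j : Fin n} (h : z i < z j) : rank z i < rank z j :=
  Fin.mk_lt_mk.2 <| card_lt_card <|
    (Finset.ssubset_iff_of_subset fun k hk => by simp_all [h.trans']).2 ⟨i, by simp [h]⟩

lemma rank_injective {z : Fin n → α} (hz : Injective z) : Injective (rank z) := by
  intro i j hij
  by_contra hne
  rcases (hz.ne hne).lt_or_gt with h | h
  · exact (rank_lt_rank z h).ne hij
  · exact (rank_lt_rank z h).ne' hij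

noncomputable def rankPerm {z : Fin n → α} (hz : Injective z) : Equiv.Perm (Fin n) :=
  Equiv.ofBijective (rank z) (Finite.injective_iff_bijective.mp (rank_injective hz))

lemma mul_rank_eq_sum (z : Fin n → ℝ) (i : Fin n) :
    z i * (rank z i : ℝ) = ∑ k, if z k < z i then z i else 0 := by
  rw [sum_ite, sum_const_zero, add_zero, sum_const, nsmul_eq_mul, mul_comm]
  rfl

lemma sum_range_add_one_sq (n : ℕ) :
    ∑ j ∈ range n, ((j : ℝ) + 1) ^ 2 = (n : ℝ) * (n + 1) * (2 * n + 1) / 6 := by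
  induction n with
  | zero => simp
  | succ m ih =>
    rw [sum_range_succ, ih]
    push_cast
    ring

lemma sum_sq_lattice (n : ℕ) :
    ∑ j : Fin n, (((j : ℝ) + 1) / (n + 1)) ^ 2 = (n : ℝ) * (2 * n + 1) / (6 * (n + 1)) := by
  simp_rw [div_pow, ← sum_div]
  rw [Fin.sum_univ_eq_sum_range (fun j => ((j : ℝ) + 1) ^ 2), sum_range_add_one_sq]
  field_simp

noncomputable def expandedRankCost (z : Fin n → ℝ) : ℝ :=
  ∑ i, (z i ^ 2 - 2 / (n + 1) * (z i + ∑ k, if z k < z i then z i else 0))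
    + (n : ℝ) * (2 * n + 1) / (6 * (n + 1))

lemma sum_sq_sub_lattice_rank {z : Fin n → ℝ} (hz : Injective z) :
    ∑ i, (z i - ((rank z i : ℝ) + 1) / (n + 1)) ^ 2 = expandedRankCost z := by
  have hsq : ∑ i, (((rank z i : ℝ) + 1) / (n + 1)) ^ 2
      = ∑ j : Fin n, (((j : ℝ) + 1) / (n + 1)) ^ 2 :=
    Equiv.sum_comp (rankPerm hz) fun j : Fin n => (((j : ℝ) + 1) / (n + 1)) ^ 2
  rw [expandedRankCost, ← sum_sq_lattice, ← hsq, ← sum_add_distrib]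
  refine sum_congr rfl fun i _ => ?_
  rw [← mul_rank_eq_sum]
  field_simp
  ring

lemma iInf_le_expandedRankCost {z : Fin n → ℝ} (hz : Injective z) :
    ⨅ π : Equiv.Perm (Fin n), (1 / (n : ℝ)) * ∑ i, (z i - ((π i : ℝ) + 1) / ((n : ℝ) + 1)) ^ 2
      ≤ 1 / (n : ℝ) * expandedRankCost z := by
  rw [← sum_sq_sub_lattice_rank hz]
  exact ciInf_le (Finite.bddBelow_range _) (rankPerm hz)

end Rank

section Uniform

open Set

lemma integral_pow_uniform (p : ℕ) : ∫ x in Icc (0 : ℝ) 1, x ^ p = 1 / (p + 1) := by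
  rw [integral_Icc_eq_integral_Ioc, ← intervalIntegral.integral_of_le zero_le_one]
  simp [integral_pow]

lemma integral_ite_lt_uniform_prod :
    ∫ q : ℝ × ℝ, (if q.2 < q.1 then q.1 else 0)
      ∂((volume.restrict (Icc (0 : ℝ) 1)).prod (volume.restrict (Icc (0 : ℝ) 1))) = 1 / 3 := by
  have hmeas : Measurable fun q : ℝ × ℝ => if q.2 < q.1 then q.1 else 0 :=
    Measurable.ite (measurableSet_lt measurable_snd measurable_fst) measurable_fst measurable_const
  have hint : Integrable (fun q : ℝ × ℝ => if q.2 < q.1 then q.1 else 0)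
      ((volume.restrict (Icc (0 : ℝ) 1)).prod (volume.restrict (Icc (0 : ℝ) 1))) := by
    refine .of_bound hmeas.aestronglyMeasurable 1 ?_
    rw [Measure.prod_restrict]
    filter_upwards [ae_restrict_mem (measurableSet_Icc.prod measurableSet_Icc)] with q ⟨h1, _⟩
    split_ifs <;> simp [abs_of_nonneg h1.1, h1.2]
  have hinner : ∀ x ∈ Icc (0 : ℝ) 1, ∫ y in Icc (0 : ℝ) 1, (if y < x then x else 0) = x ^ 2 := by
    intro x hx
    have hIio : Iio x ∩ Icc (0 : ℝ) 1 = Ico 0 x := by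
      ext y
      simp only [mem_inter_iff, mem_Iio, mem_Icc, mem_Ico]
      grind
    rw [show (fun y => if y < x then x else 0) = (Iio x).indicator fun _ => x by
        ext y; simp [indicator_apply],
      integral_indicator_const _ measurableSet_Iio, measureReal_restrict_apply measurableSet_Iio,
      hIio, Real.volume_real_Ico_of_le hx.1, smul_eq_mul, sub_zero, sq]
  rw [integral_prod _ hint, setIntegral_congr_fun measurableSet_Icc hinner, integral_pow_uniform]
  norm_num

variable {Ω : Type*} [MeasurableSpace Ω] {P : Measure Ω} {X Y : Ω → ℝ}

lemma integrable_pow_of_map_eq_uniform (hX : Measurable X)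
    (hXU : P.map X = volume.restrict (Icc (0 : ℝ) 1)) (p : ℕ) :
    Integrable (fun ω => X ω ^ p) P := by
  have hpow : Integrable (fun x : ℝ => x ^ p) (P.map X) := by
    rw [hXU]
    exact (continuous_pow p).continuousOn.integrableOn_compact isCompact_Icc
  exact (integrable_map_measure hpow.aestronglyMeasurable hX.aemeasurable).mp hpow

lemma integrable_of_map_eq_uniform (hX : Measurable X)
    (hXU : P.map X = volume.restrict (Icc (0 : ℝ) 1)) : Integrable X P := by
  simpa using integrable_pow_of_map_eq_uniform hX hXU 1

lemma integral_pow_of_map_eq_uniform (hX : Measurable X)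
    (hXU : P.map X = volume.restrict (Icc (0 : ℝ) 1)) (p : ℕ) :
    ∫ ω, X ω ^ p ∂P = 1 / (p + 1) := by
  rw [← integral_pow_uniform, ← hXU,
    integral_map hX.aemeasurable (continuous_pow p).aestronglyMeasurable]

lemma integrable_ite_lt (hX : Measurable X) (hXi : Integrable X P) (hY : Measurable Y) :
    Integrable (fun ω => if Y ω < X ω then X ω else 0) P := by
  refine hXi.mono ?_ (ae_of_all _ fun ω => ?_)
  · exact (Measurable.ite (measurableSet_lt hY hX) hX measurable_const).aestronglyMeasurable
  · split_ifs <;> simp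

lemma ProbabilityTheory.IndepFun.integral_ite_lt_of_map_eq_uniform [IsFiniteMeasure P]
    (hXY : IndepFun X Y P) (hX : Measurable X) (hY : Measurable Y)
    (hXU : P.map X = volume.restrict (Icc (0 : ℝ) 1))
    (hYU : P.map Y = volume.restrict (Icc (0 : ℝ) 1)) :
    ∫ ω, (if Y ω < X ω then X ω else 0) ∂P = 1 / 3 := by
  have hlaw : P.map (fun ω => (X ω, Y ω))
      = (volume.restrict (Icc (0 : ℝ) 1)).prod (volume.restrict (Icc (0 : ℝ) 1)) := by
    rw [(indepFun_iff_map_prod_eq_prod_map_map hX.aemeasurable hY.aemeasurable).1 hXY, hXU, hYU]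
  have hite : Measurable fun q : ℝ × ℝ => if q.2 < q.1 then q.1 else 0 :=
    Measurable.ite (measurableSet_lt measurable_snd measurable_fst) measurable_fst measurable_const
  rw [← integral_ite_lt_uniform_prod, ← hlaw,
    integral_map (hX.prodMk hY).aemeasurable hite.aestronglyMeasurable]

lemma ProbabilityTheory.IndepFun.ae_ne [IsFiniteMeasure P] (hXY : IndepFun X Y P)
    (hX : Measurable X) (hY : Measurable Y) [NullSingletonClass (P.map Y)] :
    ∀ᵐ ω ∂P, X ω ≠ Y ω := by
  have hdiag : MeasurableSet {q : ℝ × ℝ | q.1 = q.2} :=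
    measurableSet_eq_fun measurable_fst measurable_snd
  have hslice : ∀ x : ℝ, Prod.mk x ⁻¹' {q : ℝ × ℝ | q.1 = q.2} = {x} := fun x => by
    ext y; simp [eq_comm]
  simp only [ae_iff, not_not]
  change P ((fun ω => (X ω, Y ω)) ⁻¹' {q | q.1 = q.2}) = 0
  rw [← Measure.map_apply (hX.prodMk hY) hdiag,
    (indepFun_iff_map_prod_eq_prod_map_map hX.aemeasurable hY.aemeasurable).1 hXY,
    Measure.prod_apply hdiag]
  simp [hslice]

lemma ProbabilityTheory.iIndepFun.ae_injective {ι : Type*} [Countable ι] [IsFiniteMeasure P]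
    {Z : ι → Ω → ℝ} (hZ : iIndepFun Z P) (hmeas : ∀ i, Measurable (Z i))
    [∀ i, NullSingletonClass (P.map (Z i))] :
    ∀ᵐ ω ∂P, Injective fun i => Z i ω := by
  have hne : ∀ᵐ ω ∂P, ∀ i j, i ≠ j → Z i ω ≠ Z j ω := by
    refine ae_all_iff.2 fun i => ae_all_iff.2 fun j => ?_
    by_cases hij : i = j
    · simp [hij]
    · exact ((hZ.indepFun hij).ae_ne (hmeas i) (hmeas j)).mono fun ω h _ => h
  filter_upwards [hne] with ω hω i j
  exact not_imp_not.1 (hω i j)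

variable {n : ℕ} {Z : Fin n → Ω → ℝ}

lemma integrable_expandedRankCost_term (hmeas : ∀ i, Measurable (Z i))
    (hunif : ∀ i, P.map (Z i) = volume.restrict (Icc (0 : ℝ) 1)) (i : Fin n) :
    Integrable (fun ω => Z i ω ^ 2
      - 2 / ((n : ℝ) + 1) * (Z i ω + ∑ k, if Z k ω < Z i ω then Z i ω else 0)) P := by
  have hZ := integrable_of_map_eq_uniform (hmeas i) (hunif i)
  exact (integrable_pow_of_map_eq_uniform (hmeas i) (hunif i) 2).sub <| (hZ.add <|
    integrable_finsetSum _ fun k _ => integrable_ite_lt (hmeas i) hZ (hmeas k)).const_mul _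

lemma integral_expandedRankCost_term [IsFiniteMeasure P] (hmeas : ∀ i, Measurable (Z i))
    (hindep : iIndepFun Z P)
    (hunif : ∀ i, P.map (Z i) = volume.restrict (Icc (0 : ℝ) 1)) (i : Fin n) :
    ∫ ω, (Z i ω ^ 2 - 2 / ((n : ℝ) + 1) * (Z i ω + ∑ k, if Z k ω < Z i ω then Z i ω else 0)) ∂P
      = 1 / 3 - 2 / ((n : ℝ) + 1) * (1 / 2 + ((n : ℝ) - 1) / 3) := by
  have hZ := integrable_of_map_eq_uniform (hmeas i) (hunif i)
  have hmean : ∫ ω, Z i ω ∂P = 1 / 2 := by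
    simpa [one_add_one_eq_two] using integral_pow_of_map_eq_uniform (hmeas i) (hunif i) 1
  have hite : ∀ k, Integrable (fun ω => if Z k ω < Z i ω then Z i ω else 0) P := fun k =>
    integrable_ite_lt (hmeas i) hZ (hmeas k)
  have hcross : ∀ k, ∫ ω, (if Z k ω < Z i ω then Z i ω else 0) ∂P
      = if k = i then 0 else 1 / 3 := by
    intro k
    split_ifs with hki
    · simp [hki]
    · exact (hindep.indepFun (Ne.symm hki)).integral_ite_lt_of_map_eq_uniform (hmeas i)
        (hmeas k) (hunif i) (hunif k)
  have hsum : Integrable (fun ω => ∑ k, if Z k ω < Z i ω then Z i ω else 0) P :=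
    integrable_finsetSum _ fun k _ => hite k
  have hadd : Integrable (fun ω => Z i ω + ∑ k, if Z k ω < Z i ω then Z i ω else 0) P :=
    hZ.add hsum
  rw [integral_sub (integrable_pow_of_map_eq_uniform (hmeas i) (hunif i) 2) (hadd.const_mul _),
    integral_const_mul, integral_add hZ hsum, integral_finsetSum _ fun k _ => hite k,
    Finset.sum_congr rfl fun k _ => hcross k, integral_pow_of_map_eq_uniform (hmeas i) (hunif i) 2]
  simp only [Finset.sum_ite, Finset.filter_ne', Finset.sum_const_zero, Finset.sum_const,
    Finset.card_erase_of_mem (Finset.mem_univ i), Finset.card_univ, Fintype.card_fin,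
    nsmul_eq_mul, Nat.cast_pred i.pos, hmean]
  push_cast
  ring

lemma integrable_expandedRankCost [IsFiniteMeasure P] (hmeas : ∀ i, Measurable (Z i))
    (hunif : ∀ i, P.map (Z i) = volume.restrict (Icc (0 : ℝ) 1)) :
    Integrable (fun ω => expandedRankCost fun i => Z i ω) P :=
  (integrable_finsetSum _ fun i _ => integrable_expandedRankCost_term hmeas hunif i).add
    (integrable_const _)

lemma integral_expandedRankCost [IsProbabilityMeasure P] (hmeas : ∀ i, Measurable (Z i))
    (hindep : iIndepFun Z P)
    (hunif : ∀ i, P.map (Z i) = volume.restrict (Icc (0 : ℝ) 1)) :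
    ∫ ω, expandedRankCost (fun i => Z i ω) ∂P = (n : ℝ) / (6 * (n + 1)) := by
  simp only [expandedRankCost]
  rw [integral_add (integrable_finsetSum _ fun i _ => integrable_expandedRankCost_term hmeas hunif i)
    (integrable_const _), integral_finsetSum _ fun i _ => integrable_expandedRankCost_term hmeas hunif i]
  simp only [integral_expandedRankCost_term hmeas hindep hunif, Finset.sum_const, Finset.card_univ,
    Fintype.card_fin, nsmul_eq_mul, integral_const, probReal_univ, smul_eq_mul, one_mul]
  field_simp
  ring

end Uniform

/-- For `Z₁,…,Zₙ` i.i.d. uniform on `[0,1]` and the lattice `Qᵢⁿ = i/(n+1)` (1-based),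
the expected optimal assignment cost satisfies
`E[min_π (1/n) ∑ᵢ (Zᵢ - Q_{π(i)}ⁿ)²] ≤ 1/(4(n+2))`; in particular the bound tends
to `0` as `n → ∞`. -/
theorem stmt_6 {Ω : Type*} [MeasurableSpace Ω] (P : Measure Ω) [IsProbabilityMeasure P]
    (n : ℕ) (hn : 0 < n) (Z : Fin n → Ω → ℝ)
    (hmeas : ∀ i, Measurable (Z i))
    (hindep : iIndepFun Z P)
    (hunif : ∀ i, Measure.map (Z i) P = volume.restrict (Set.Icc (0 : ℝ) 1)) :
    (∫ ω, ⨅ π : Equiv.Perm (Fin n),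
        (1 / (n : ℝ)) * ∑ i : Fin n, (Z i ω - ((π i : ℝ) + 1) / ((n : ℝ) + 1)) ^ 2 ∂P)
      ≤ 1 / (4 * ((n : ℝ) + 2)) ∧
    Tendsto (fun m : ℕ => 1 / (4 * ((m : ℝ) + 2))) atTop (nhds 0) := by
  refine ⟨?_, ?_⟩
  · have : ∀ i, NullSingletonClass (P.map (Z i)) := fun i => by rw [hunif i]; infer_instance
    have hcost := (hindep.ae_injective hmeas).mono fun ω hω => iInf_le_expandedRankCost hω
    have hn' : (1 : ℝ) ≤ n := by exact_mod_cast hn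
    calc _ ≤ ∫ ω, 1 / (n : ℝ) * expandedRankCost (fun i => Z i ω) ∂P :=
          integral_mono_of_nonneg (ae_of_all _ fun ω => Real.iInf_nonneg fun π => by positivity)
            ((integrable_expandedRankCost hmeas hunif).const_mul _) hcost
      _ = 1 / (6 * ((n : ℝ) + 1)) := by
        rw [integral_const_mul, integral_expandedRankCost hmeas hindep hunif]
        field_simp
      _ ≤ 1 / (4 * ((n : ℝ) + 2)) := one_div_le_one_div_of_le (by positivity) (by linarith)
  · simp only [one_div]
    exact ((tendsto_natCast_atTop_atTop.atTop_add tendsto_const_nhds).const_mul_atTop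
      four_pos).inv_tendsto_atTop
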